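/- The trilinear operator T(f,g,h)(ξ) = ∫_{−1}^{1} ∫_{ℝ²} f(ξ+x) · conj(g(ξ+x+λx⊥)) · h(ξ+λx⊥) dx dλ is bounded from L²(ℝ²)³ to L²(ℝ²): ‖T(f,g,h)‖_{L²} ≤ C‖f‖_{L²}‖g‖_{L²}‖h‖_{L²}. -/

import Mathlib

/-!
Write `W_λ(ξ) = ∫ |f(ξ+x)| |g(ξ+x+λx⊥)| |h(ξ+λx⊥)| dx`, so that `|T(f,g,h)| ≤ ∫_{-1}^{1} W_λ dλ`.
For fixed `λ`, Cauchy–Schwarz in `x` splits off `g`: since `x ↦ x + λx⊥` has determinant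
`1 + λ² ≥ 1`, `W_λ(ξ)² ≤ ‖g‖₂² ∫ |f(ξ+x)|² |h(ξ+λx⊥)|² dx`. Integrating in `ξ` and substituting
`u = ξ + x`, the inner integral runs over `ξ ↦ ξ - λξ⊥ + λu⊥`, again of determinant `1 + λ²`,
so `‖W_λ‖₂ ≤ ‖f‖₂ ‖g‖₂ ‖h‖₂`. Cauchy–Schwarz over `λ ∈ [-1, 1]` then gives
`‖T(f,g,h)‖₂ ≤ 2 ‖f‖₂ ‖g‖₂ ‖h‖₂`.
-/

open MeasureTheory
noncomputable section

abbrev E2 := EuclideanSpace ℝ (Fin 2)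

/-- Counterclockwise rotation by π/2 in the plane. -/
def rot (z : E2) : E2 := WithLp.toLp 2 ![-(z 1), z 0]

/-- The continuous resonant (CR) trilinear operator
T(f,g,h)(ξ) = ∫_{-1}^{1} ∫_{ℝ²} f(ξ+x)·conj(g(ξ+x+λx⊥))·h(ξ+λx⊥) dx dλ. -/
def T (f g h : E2 → ℂ) (ξ : E2) : ℂ :=
  ∫ l in Set.Icc (-1 : ℝ) 1, ∫ x : E2,
    f (ξ + x) * (starRingEnd ℂ) (g (ξ + x + l • rot x)) * h (ξ + l • rot x)

open scoped ENNReal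

theorem lintegral_mul_sq_le {α : Type*} [MeasurableSpace α] (μ : Measure α) {f g : α → ℝ≥0∞}
    (hf : AEMeasurable f μ) (hg : AEMeasurable g μ) :
    (∫⁻ a, f a * g a ∂μ) ^ 2 ≤ (∫⁻ a, f a ^ 2 ∂μ) * ∫⁻ a, g a ^ 2 ∂μ := by
  have half_sq (x : ℝ≥0∞) : (x ^ (1 / 2 : ℝ)) ^ 2 = x := by
    rw [← ENNReal.rpow_natCast, ← ENNReal.rpow_mul]; norm_num
  have h := ENNReal.lintegral_mul_le_Lp_mul_Lq μ Real.HolderConjugate.two_two hf hg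
  simp only [ENNReal.rpow_two] at h
  simpa only [Pi.mul_apply, mul_pow, half_sq] using pow_le_pow_left' h 2

theorem lintegral_sq_lintegral_le {α β : Type*} [MeasurableSpace α] [MeasurableSpace β]
    (μ : Measure α) (ν : Measure β) [SFinite μ] [SFinite ν] {W : α → β → ℝ≥0∞}
    (hW : Measurable (Function.uncurry W)) :
    ∫⁻ x, (∫⁻ y, W x y ∂ν) ^ 2 ∂μ ≤ ν Set.univ * ∫⁻ y, ∫⁻ x, W x y ^ 2 ∂μ ∂ν := by
  calc ∫⁻ x, (∫⁻ y, W x y ∂ν) ^ 2 ∂μ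
      ≤ ∫⁻ x, ν Set.univ * ∫⁻ y, W x y ^ 2 ∂ν ∂μ := by
        refine lintegral_mono fun x => ?_
        simpa using lintegral_mul_sq_le ν (f := 1) aemeasurable_const
          hW.of_uncurry_left.aemeasurable
    _ = ν Set.univ * ∫⁻ x, ∫⁻ y, W x y ^ 2 ∂ν ∂μ :=
        lintegral_const_mul _ (Measurable.lintegral_prod_right (by fun_prop))
    _ = ν Set.univ * ∫⁻ y, ∫⁻ x, W x y ^ 2 ∂μ ∂ν := by
        rw [lintegral_lintegral_swap (by fun_prop)]

theorem AEMeasurable.exists_measurable_ge_ae_eq {α : Type*} [MeasurableSpace α] {μ : Measure α}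
    {f : α → ℝ≥0∞} (hf : AEMeasurable f μ) : ∃ g, Measurable g ∧ f ≤ g ∧ f =ᵐ[μ] g := by
  classical
  set S := toMeasurable μ {x | f x ≠ hf.mk f x}
  have hS : μ S = 0 := by rw [measure_toMeasurable]; exact ae_iff.1 hf.ae_eq_mk
  refine ⟨S.piecewise (fun _ => ⊤) (hf.mk f), measurable_const.piecewise
    (measurableSet_toMeasurable _ _) hf.measurable_mk, fun x => ?_, ?_⟩
  · by_cases hx : x ∈ S
    · simp [hx]
    · simp only [Set.piecewise_eq_of_notMem _ _ _ hx]
      exact (not_not.1 fun h => hx (subset_toMeasurable _ _ h)).le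
  · filter_upwards [hf.ae_eq_mk, measure_eq_zero_iff_ae_notMem.1 hS] with x hx hxS
    simp [hxS, hx]

theorem eLpNorm_two_sq {α E : Type*} [MeasurableSpace α] [NormedAddCommGroup E] (μ : Measure α)
    (f : α → E) : eLpNorm f 2 μ ^ 2 = ∫⁻ x, ‖f x‖ₑ ^ 2 ∂μ := by
  simpa using eLpNorm_nnreal_pow_eq_lintegral (μ := μ) (f := f) (p := 2) two_ne_zero

theorem lintegral_comp_linearMap_add_le {E : Type*} [NormedAddCommGroup E] [NormedSpace ℝ E]
    [MeasurableSpace E] [BorelSpace E] [FiniteDimensional ℝ E] (μ : Measure E)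
    [μ.IsAddHaarMeasure] {A : E →ₗ[ℝ] E} (hA : 1 ≤ |LinearMap.det A|) (φ : E → ℝ≥0∞) (v : E) :
    ∫⁻ x, φ (A x + v) ∂μ ≤ ∫⁻ x, φ x ∂μ := by
  have hdet : LinearMap.det A ≠ 0 := by
    rintro h; rw [h, abs_zero] at hA; linarith
  let e : E ≃ᵐ E :=
    (LinearMap.equivOfDetNeZero A hdet).toContinuousLinearEquiv.toHomeomorph.toMeasurableEquiv
  calc ∫⁻ x, φ (A x + v) ∂μ = ∫⁻ y, φ (y + v) ∂(μ.map A) :=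
        (lintegral_map_equiv (fun y => φ (y + v)) e).symm
    _ = ENNReal.ofReal |(LinearMap.det A)⁻¹| * ∫⁻ y, φ y ∂μ := by
        rw [Measure.map_linearMap_addHaar_eq_smul_addHaar μ hdet, lintegral_smul_measure,
          lintegral_add_right_eq_self (fun y => φ y) v, smul_eq_mul]
    _ ≤ 1 * ∫⁻ y, φ y ∂μ := by
        gcongr
        rw [abs_inv]
        exact ENNReal.ofReal_le_one.2 (inv_le_one_of_one_le₀ hA)
    _ = ∫⁻ y, φ y ∂μ := one_mul _

def rotₗ : E2 →ₗ[ℝ] E2 where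
  toFun := rot
  map_add' x y := by ext i; fin_cases i <;> simp [rot, add_comm]
  map_smul' c x := by ext i; fin_cases i <;> simp [rot]

lemma rot_add (x y : E2) : rot (x + y) = rot x + rot y := map_add rotₗ x y

@[fun_prop]
lemma continuous_rot : Continuous rot := rotₗ.continuous_of_finiteDimensional

def shear (l : ℝ) : E2 →ₗ[ℝ] E2 := LinearMap.id + l • rotₗ

lemma shear_apply (l : ℝ) (x : E2) : shear l x = x + l • rot x := rfl

lemma det_shear (l : ℝ) : LinearMap.det (shear l) = 1 + l ^ 2 := by
  let b := (EuclideanSpace.basisFun (Fin 2) ℝ).toBasis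
  rw [← LinearMap.det_toMatrix b, Matrix.det_fin_two]
  simp [b, LinearMap.toMatrix_apply, shear_apply, rot]
  ring

lemma lintegral_comp_shear_add_le (l : ℝ) (φ : E2 → ℝ≥0∞) (v : E2) :
    ∫⁻ x, φ (x + l • rot x + v) ≤ ∫⁻ x, φ x :=
  lintegral_comp_linearMap_add_le volume (A := shear l)
    (by rw [det_shear, abs_of_pos (by positivity)]; nlinarith [sq_nonneg l]) φ v

lemma lintegral_lintegral_mul_comp_rot_le {p q : E2 → ℝ≥0∞} (hp : Measurable p)
    (hq : Measurable q) (l : ℝ) :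
    ∫⁻ ξ, ∫⁻ x, p (ξ + x) * q (ξ + l • rot x) ≤ (∫⁻ y, p y) * ∫⁻ y, q y := by
  calc ∫⁻ ξ, ∫⁻ x, p (ξ + x) * q (ξ + l • rot x)
      = ∫⁻ ξ, ∫⁻ u, p u * q (ξ + (-l) • rot ξ + l • rot u) := by
        refine lintegral_congr fun ξ => ?_
        rw [← lintegral_add_left_eq_self (fun u => p u * q (ξ + (-l) • rot ξ + l • rot u)) ξ]
        refine lintegral_congr fun x => ?_
        rw [rot_add, smul_add, neg_smul, add_assoc, neg_add_cancel_left]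
    _ = ∫⁻ u, ∫⁻ ξ, p u * q (ξ + (-l) • rot ξ + l • rot u) :=
        lintegral_lintegral_swap (by fun_prop)
    _ = ∫⁻ u, p u * ∫⁻ ξ, q (ξ + (-l) • rot ξ + l • rot u) :=
        lintegral_congr fun u => lintegral_const_mul _ (by fun_prop)
    _ ≤ ∫⁻ u, p u * ∫⁻ y, q y :=
        lintegral_mono fun u => mul_le_mul_right (lintegral_comp_shear_add_le _ _ _) _
    _ = (∫⁻ y, p y) * ∫⁻ y, q y := lintegral_mul_const _ hp

def crSlice (a b c : E2 → ℝ≥0∞) (ξ : E2) (l : ℝ) : ℝ≥0∞ :=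
  ∫⁻ x, a (ξ + x) * b (ξ + x + l • rot x) * c (ξ + l • rot x)

section crSlice

variable {a b c : E2 → ℝ≥0∞}

lemma measurable_crSlice (ha : Measurable a) (hb : Measurable b) (hc : Measurable c) :
    Measurable (Function.uncurry (crSlice a b c)) :=
  Measurable.lintegral_prod_right' (f := fun (p : (E2 × ℝ) × E2) =>
    a (p.1.1 + p.2) * b (p.1.1 + p.2 + p.1.2 • rot p.2) * c (p.1.1 + p.1.2 • rot p.2))
    (by fun_prop)

lemma crSlice_mono {a' b' c' : E2 → ℝ≥0∞} (ha : a ≤ a') (hb : b ≤ b') (hc : c ≤ c')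
    (ξ : E2) (l : ℝ) : crSlice a b c ξ l ≤ crSlice a' b' c' ξ l :=
  lintegral_mono fun x => by gcongr <;> apply_assumption

lemma crSlice_sq_le (ha : Measurable a) (hb : Measurable b) (hc : Measurable c) (ξ : E2)
    (l : ℝ) :
    crSlice a b c ξ l ^ 2 ≤
      (∫⁻ x, a (ξ + x) ^ 2 * c (ξ + l • rot x) ^ 2) * ∫⁻ y, b y ^ 2 := by
  calc crSlice a b c ξ l ^ 2
      = (∫⁻ x, (a (ξ + x) * c (ξ + l • rot x)) * b (ξ + x + l • rot x)) ^ 2 := by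
        simp only [crSlice, mul_right_comm]
    _ ≤ (∫⁻ x, (a (ξ + x) * c (ξ + l • rot x)) ^ 2) * ∫⁻ x, b (ξ + x + l • rot x) ^ 2 :=
        lintegral_mul_sq_le volume (by fun_prop) (by fun_prop)
    _ ≤ (∫⁻ x, a (ξ + x) ^ 2 * c (ξ + l • rot x) ^ 2) * ∫⁻ y, b y ^ 2 := by
        simp only [mul_pow]
        refine mul_le_mul_right ?_ _
        calc ∫⁻ x, b (ξ + x + l • rot x) ^ 2 = ∫⁻ x, b (x + l • rot x + ξ) ^ 2 := by
              congr! 4; abel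
          _ ≤ ∫⁻ y, b y ^ 2 := lintegral_comp_shear_add_le l (fun y => b y ^ 2) ξ

lemma lintegral_crSlice_sq_le (ha : Measurable a) (hb : Measurable b) (hc : Measurable c)
    (l : ℝ) :
    ∫⁻ ξ, crSlice a b c ξ l ^ 2 ≤ (∫⁻ y, a y ^ 2) * (∫⁻ y, b y ^ 2) * ∫⁻ y, c y ^ 2 :=
  calc ∫⁻ ξ, crSlice a b c ξ l ^ 2
      ≤ ∫⁻ ξ, (∫⁻ x, a (ξ + x) ^ 2 * c (ξ + l • rot x) ^ 2) * ∫⁻ y, b y ^ 2 :=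
        lintegral_mono fun ξ => crSlice_sq_le ha hb hc ξ l
    _ = (∫⁻ ξ, ∫⁻ x, a (ξ + x) ^ 2 * c (ξ + l • rot x) ^ 2) * ∫⁻ y, b y ^ 2 :=
        lintegral_mul_const _ (Measurable.lintegral_prod_right (by fun_prop))
    _ ≤ (∫⁻ y, a y ^ 2) * (∫⁻ y, c y ^ 2) * ∫⁻ y, b y ^ 2 := by
        gcongr ?_ * _
        exact lintegral_lintegral_mul_comp_rot_le (by fun_prop) (by fun_prop) l
    _ = (∫⁻ y, a y ^ 2) * (∫⁻ y, b y ^ 2) * ∫⁻ y, c y ^ 2 := mul_right_comm _ _ _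

lemma lintegral_sq_setLIntegral_crSlice_le (ha : Measurable a) (hb : Measurable b)
    (hc : Measurable c) :
    ∫⁻ ξ, (∫⁻ l in Set.Icc (-1 : ℝ) 1, crSlice a b c ξ l) ^ 2 ≤
      4 * ((∫⁻ y, a y ^ 2) * (∫⁻ y, b y ^ 2) * ∫⁻ y, c y ^ 2) := by
  have hvol : volume (Set.Icc (-1 : ℝ) 1) = 2 := by norm_num [Real.volume_Icc]
  calc ∫⁻ ξ, (∫⁻ l in Set.Icc (-1 : ℝ) 1, crSlice a b c ξ l) ^ 2
      ≤ 2 * ∫⁻ l in Set.Icc (-1 : ℝ) 1, ∫⁻ ξ, crSlice a b c ξ l ^ 2 := by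
        simpa [hvol] using lintegral_sq_lintegral_le volume
          (volume.restrict (Set.Icc (-1 : ℝ) 1)) (measurable_crSlice ha hb hc)
    _ ≤ 2 * ∫⁻ l in Set.Icc (-1 : ℝ) 1,
          (∫⁻ y, a y ^ 2) * (∫⁻ y, b y ^ 2) * ∫⁻ y, c y ^ 2 := by
        gcongr with l
        exact lintegral_crSlice_sq_le ha hb hc l
    _ = _ := by rw [setLIntegral_const, hvol]; ring

end crSlice

lemma enorm_T_le (f g h : E2 → ℂ) (ξ : E2) :
    ‖T f g h ξ‖ₑ ≤ ∫⁻ l in Set.Icc (-1 : ℝ) 1, crSlice (‖f ·‖ₑ) (‖g ·‖ₑ) (‖h ·‖ₑ) ξ l :=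
  (enorm_integral_le_lintegral_enorm _).trans <| lintegral_mono fun l =>
    (enorm_integral_le_lintegral_enorm _).trans_eq <| by simp [crSlice]

/-- The CR trilinear operator is bounded from (L²)³ to L². -/
theorem stmt10 :
    ∃ C : ℝ, 0 < C ∧ ∀ f g h : E2 → ℂ,
      MemLp f 2 volume → MemLp g 2 volume → MemLp h 2 volume →
      eLpNorm (T f g h) 2 volume ≤
        ENNReal.ofReal C * eLpNorm f 2 volume * eLpNorm g 2 volume * eLpNorm h 2 volume := by
  refine ⟨2, two_pos, fun f g h hf hg hh => ?_⟩
  -- Measurable majorants that agree a.e. with `|f|, |g|, |h|` bound `T` pointwise, so no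
  -- null-set bookkeeping along the shears is needed.
  obtain ⟨a, ha, hfa, hae⟩ := hf.aestronglyMeasurable.enorm.exists_measurable_ge_ae_eq
  obtain ⟨b, hb, hgb, hbe⟩ := hg.aestronglyMeasurable.enorm.exists_measurable_ge_ae_eq
  obtain ⟨c, hc, hhc, hce⟩ := hh.aestronglyMeasurable.enorm.exists_measurable_ge_ae_eq
  have norm_sq {u : E2 → ℂ} {v : E2 → ℝ≥0∞} (huv : (‖u ·‖ₑ) =ᵐ[volume] v) :
      eLpNorm u 2 volume ^ 2 = ∫⁻ y, v y ^ 2 := by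
    rw [eLpNorm_two_sq]
    exact lintegral_congr_ae (huv.fun_comp (· ^ 2))
  rw [ENNReal.ofReal_ofNat, ← ENNReal.pow_le_pow_left_iff two_ne_zero]
  calc eLpNorm (T f g h) 2 volume ^ 2 = ∫⁻ ξ, ‖T f g h ξ‖ₑ ^ 2 := eLpNorm_two_sq _ _
    _ ≤ ∫⁻ ξ, (∫⁻ l in Set.Icc (-1 : ℝ) 1, crSlice a b c ξ l) ^ 2 := by
        refine lintegral_mono fun ξ => pow_le_pow_left' ((enorm_T_le f g h ξ).trans ?_) 2
        exact lintegral_mono fun l => crSlice_mono hfa hgb hhc ξ l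
    _ ≤ 4 * ((∫⁻ y, a y ^ 2) * (∫⁻ y, b y ^ 2) * ∫⁻ y, c y ^ 2) :=
        lintegral_sq_setLIntegral_crSlice_le ha hb hc
    _ = _ := by rw [← norm_sq hae, ← norm_sq hbe, ← norm_sq hce]; ring
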